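/- arXiv:1611.01735 — 5 statements merged into one kernel-verified Lean document; each statement's English description precedes it below -/
import Mathlib

section
/- Let n > t > 0 be integers and let U_1, ..., U_k be pairwise disjoint sets each of size n. For each i in [t], let i_1, i_2 be distinct indices in [k] and let F_i be a subset of U_{i_1} × U_{i_2} (viewed as a bipartite graph) with more than (t-1)n edges. Then {F_1, ..., F_t} admits a rainbow matching, i.e., there exist pairwise disjoint edges e_1, ..., e_t with e_i in F_i. -/
open Finset

/-- Auxiliary: index equality from shared membership in disjoint classes. -/
private lemma class_eq {V : Type*} [DecidableEq V] {k : ℕ} {U : Fin k → Finset V}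
    (hUdisj : ∀ i j, i ≠ j → Disjoint (U i) (U j)) {c d : Fin k} {v : V}
    (hc : v ∈ U c) (hd : v ∈ U d) : c = d := by
  by_contra h
  exact (Finset.disjoint_left.mp (hUdisj c d h) hc) hd

private lemma rainbow_aux {V : Type*} [DecidableEq V] (n k : ℕ)
    (U : Fin k → Finset V)
    (hUcard : ∀ i, (U i).card = n)
    (hUdisj : ∀ i j, i ≠ j → Disjoint (U i) (U j)) :
    ∀ t, n > t → ∀ (a b : Fin t → Fin k), (∀ i, a i ≠ b i) →
    ∀ (F : Fin t → Finset (V × V)), (∀ i, F i ⊆ (U (a i)) ×ˢ (U (b i))) →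
    (∀ i, (F i).card > (t - 1) * n) →
    ∃ e : Fin t → V × V, (∀ i, e i ∈ F i) ∧
      ∀ i j, i ≠ j →
        Disjoint ({(e i).1, (e i).2} : Finset V) ({(e j).1, (e j).2} : Finset V) := by
  intro t
  induction t with
  | zero =>
    intro _ a b _ F _ _
    exact ⟨Fin.elim0, fun i => i.elim0, fun i => i.elim0⟩
  | succ t IH =>
    intro hnt a b hab F hFsub hFcard
    set i₀ : Fin (t + 1) := Fin.last t with hi₀
    have hcard0 : t * n < (F i₀).card := by
      have := hFcard i₀; simpa using this
    -- find a vertex x of degree ≥ t+1 on the a-side of F i₀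
    have hmaps : ∀ p ∈ F i₀, p.1 ∈ U (a i₀) := fun p hp =>
      (Finset.mem_product.mp (hFsub i₀ hp)).1
    obtain ⟨x, hxU, hxdeg⟩ :
        ∃ x ∈ U (a i₀), t < ((F i₀).filter fun p => p.1 = x).card := by
      apply Finset.exists_lt_card_fiber_of_mul_lt_card_of_maps_to hmaps
      rw [hUcard, mul_comm]; exact hcard0
    -- delete x from the other graphs
    set F' : Fin t → Finset (V × V) :=
      fun i => (F i.castSucc).filter fun p => p.1 ≠ x ∧ p.2 ≠ x with hF'
    have hF'sub : ∀ i, F' i ⊆ F i.castSucc := fun i => Finset.filter_subset _ _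
    have hF'card : ∀ i : Fin t, (t - 1) * n < (F' i).card := by
      intro i
      have hrem : ((F i.castSucc).filter fun p => ¬(p.1 ≠ x ∧ p.2 ≠ x)).card ≤ n := by
        by_cases hxa : x ∈ U (a i.castSucc)
        · -- every removed edge has first coordinate x; map by snd into U (b _)
          calc ((F i.castSucc).filter fun p => ¬(p.1 ≠ x ∧ p.2 ≠ x)).card
              ≤ (U (b i.castSucc)).card := by
                apply Finset.card_le_card_of_injOn Prod.snd
                · intro p hp
                  exact (Finset.mem_product.mp (hFsub _ (Finset.mem_filter.mp hp).1)).2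
                · intro p hp q hq hpq
                  have hp' := Finset.mem_filter.mp hp
                  have hq' := Finset.mem_filter.mp hq
                  have hp1 : p.1 = x := by
                    rcases not_and_or.mp hp'.2 with h | h
                    · simpa using h
                    · exfalso
                      have h2 : p.2 = x := by simpa using h
                      have := (Finset.mem_product.mp (hFsub _ hp'.1)).2
                      rw [h2] at this
                      exact (hab i.castSucc) (class_eq hUdisj hxa this)
                  have hq1 : q.1 = x := by
                    rcases not_and_or.mp hq'.2 with h | h
                    · simpa using h
                    · exfalso
                      have h2 : q.2 = x := by simpa using h
                      have := (Finset.mem_product.mp (hFsub _ hq'.1)).2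
                      rw [h2] at this
                      exact (hab i.castSucc) (class_eq hUdisj hxa this)
                  exact Prod.ext (hp1.trans hq1.symm) hpq
            _ = n := hUcard _
        · -- every removed edge has second coordinate x; map by fst into U (a _)
          calc ((F i.castSucc).filter fun p => ¬(p.1 ≠ x ∧ p.2 ≠ x)).card
              ≤ (U (a i.castSucc)).card := by
                apply Finset.card_le_card_of_injOn Prod.fst
                · intro p hp
                  exact (Finset.mem_product.mp (hFsub _ (Finset.mem_filter.mp hp).1)).1
                · intro p hp q hq hpq
                  have hp' := Finset.mem_filter.mp hp
                  have hq' := Finset.mem_filter.mp hq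
                  have hp2 : p.2 = x := by
                    rcases not_and_or.mp hp'.2 with h | h
                    · exfalso
                      have h1 : p.1 = x := by simpa using h
                      have := (Finset.mem_product.mp (hFsub _ hp'.1)).1
                      rw [h1] at this
                      exact hxa this
                    · simpa using h
                  have hq2 : q.2 = x := by
                    rcases not_and_or.mp hq'.2 with h | h
                    · exfalso
                      have h1 : q.1 = x := by simpa using h
                      have := (Finset.mem_product.mp (hFsub _ hq'.1)).1
                      rw [h1] at this
                      exact hxa this
                    · simpa using h
                  exact Prod.ext hpq (hp2.trans hq2.symm)
            _ = n := hUcard _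
      have hsplit := Finset.card_filter_add_card_filter_not
        (s := F i.castSucc) (p := fun p : V × V => p.1 ≠ x ∧ p.2 ≠ x)
      have hbig : t * n < (F i.castSucc).card := by
        have := hFcard i.castSucc; simpa using this
      have ht1 : t ≥ 1 := i.pos
      have heq : (t - 1) * n + n = t * n := by
        cases t with
        | zero => omega
        | succ t' => simp [Nat.succ_sub_one, Nat.succ_mul]
      have hdef : (F' i).card = ((F i.castSucc).filter fun p => p.1 ≠ x ∧ p.2 ≠ x).card := rfl
      omega
    -- apply the induction hypothesis
    obtain ⟨e', he'mem, he'disj⟩ :=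
      IH (Nat.lt_of_succ_lt hnt) (fun i => a i.castSucc) (fun i => b i.castSucc)
        (fun i => hab i.castSucc) F'
        (fun i => (hF'sub i).trans (hFsub i.castSucc)) hF'card
    have he'x : ∀ i, (e' i).1 ≠ x ∧ (e' i).2 ≠ x :=
      fun i => (Finset.mem_filter.mp (he'mem i)).2
    have he'F : ∀ i, e' i ∈ F i.castSucc := fun i => hF'sub i (he'mem i)
    -- choose y: a neighbor of x avoiding the vertices of e' in class U (b i₀)
    set Y : Finset V := ((F i₀).filter fun p => p.1 = x).image Prod.snd with hY
    have hYcard : t < Y.card := by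
      rw [hY, Finset.card_image_of_injOn]
      · exact hxdeg
      · intro p hp q hq hpq
        have hp1 := (Finset.mem_filter.mp hp).2
        have hq1 := (Finset.mem_filter.mp hq).2
        exact Prod.ext (hp1.trans hq1.symm) hpq
    set g : Fin t → V := fun j => if (e' j).1 ∈ U (b i₀) then (e' j).1 else (e' j).2
      with hg
    set Forb : Finset V := Finset.univ.image g with hForb
    have hForbcard : Forb.card ≤ t := by
      calc Forb.card ≤ Finset.univ.card := Finset.card_image_le
        _ = t := by simp
    obtain ⟨y, hyYF⟩ : (Y \ Forb).Nonempty := by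
      rw [← Finset.card_pos]
      have := Finset.le_card_sdiff Forb Y
      omega
    have hyY : y ∈ Y := (Finset.mem_sdiff.mp hyYF).1
    have hyForb : y ∉ Forb := (Finset.mem_sdiff.mp hyYF).2
    obtain ⟨p, hpF, hpy⟩ := Finset.mem_image.mp hyY
    have hpF' := Finset.mem_filter.mp hpF
    have hxyF : (x, y) ∈ F i₀ := by
      have hpe : p = (x, y) := Prod.ext hpF'.2 hpy
      exact hpe ▸ hpF'.1
    have hyU : y ∈ U (b i₀) := (Finset.mem_product.mp (hFsub i₀ hxyF)).2
    have hxy : x ≠ y := by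
      intro h
      rw [h] at hxU
      exact hab i₀ (class_eq hUdisj hxU hyU)
    -- y avoids all endpoints of e'
    have hyavoid : ∀ j : Fin t, y ≠ (e' j).1 ∧ y ≠ (e' j).2 := by
      intro j
      have hp1 : (e' j).1 ∈ U (a j.castSucc) :=
        (Finset.mem_product.mp (hFsub _ (he'F j))).1
      have hp2 : (e' j).2 ∈ U (b j.castSucc) :=
        (Finset.mem_product.mp (hFsub _ (he'F j))).2
      constructor
      · intro h
        apply hyForb
        rw [hForb]
        apply Finset.mem_image.mpr
        refine ⟨j, Finset.mem_univ j, ?_⟩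
        rw [hg]
        simp only
        rw [if_pos (by rw [← h]; exact hyU), ← h]
      · intro h
        apply hyForb
        rw [hForb]
        apply Finset.mem_image.mpr
        refine ⟨j, Finset.mem_univ j, ?_⟩
        rw [hg]
        simp only
        have h1notin : (e' j).1 ∉ U (b i₀) := by
          intro hin
          have hbj : b j.castSucc = b i₀ := by
            apply class_eq hUdisj hp2
            rw [← h]; exact hyU
          have haj : a j.castSucc = b i₀ := class_eq hUdisj hp1 hin
          exact hab j.castSucc (haj.trans hbj.symm)
        rw [if_neg h1notin, ← h]
    -- assemble
    refine ⟨Fin.snoc e' (x, y), ?_, ?_⟩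
    · intro i
      rcases Fin.eq_castSucc_or_eq_last i with ⟨j, rfl⟩ | rfl
      · rw [Fin.snoc_castSucc]; exact he'F j
      · rw [Fin.snoc_last]; exact hxyF
    · have key : ∀ j : Fin t,
          Disjoint ({x, y} : Finset V) {(e' j).1, (e' j).2} := by
        intro j
        rw [Finset.disjoint_left]
        intro v hv hv'
        simp only [Finset.mem_insert, Finset.mem_singleton] at hv hv'
        rcases hv with rfl | rfl <;> rcases hv' with h | h
        · exact (he'x j).1 h.symm
        · exact (he'x j).2 h.symm
        · exact (hyavoid j).1 h
        · exact (hyavoid j).2 h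
      intro i j hij
      rcases Fin.eq_castSucc_or_eq_last i with ⟨i', rfl⟩ | rfl <;>
        rcases Fin.eq_castSucc_or_eq_last j with ⟨j', rfl⟩ | rfl
      · rw [Fin.snoc_castSucc, Fin.snoc_castSucc]
        exact he'disj i' j' (fun h => hij (by rw [h]))
      · rw [Fin.snoc_castSucc, Fin.snoc_last]
        exact (key i').symm
      · rw [Fin.snoc_last, Fin.snoc_castSucc]
        exact key j'
      · exact absurd rfl hij

/-- Lemma 2.1 (bipartite rainbow matching): if `U 1, …, U k` are pairwise disjoint
`n`-sets, and each `F i` is a bipartite graph between two distinct classes with more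
than `(t-1)*n` edges, then there is a rainbow matching. -/
theorem bipartite_rainbow_matching
    {V : Type*} [DecidableEq V] (n t k : ℕ) (hnt : n > t) (ht : t > 0)
    (U : Fin k → Finset V)
    (hUcard : ∀ i, (U i).card = n)
    (hUdisj : ∀ i j, i ≠ j → Disjoint (U i) (U j))
    (a b : Fin t → Fin k) (hab : ∀ i, a i ≠ b i)
    (F : Fin t → Finset (V × V))
    (hFsub : ∀ i, F i ⊆ (U (a i)) ×ˢ (U (b i)))
    (hFcard : ∀ i, (F i).card > (t - 1) * n) :
    ∃ e : Fin t → V × V, (∀ i, e i ∈ F i) ∧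
      ∀ i j, i ≠ j →
        Disjoint ({(e i).1, (e i).2} : Finset V) ({(e j).1, (e j).2} : Finset V) :=
  rainbow_aux n k U hUcard hUdisj t hnt a b hab F hFsub hFcard
end

section
/- Let k, n, t be positive integers with t ≤ n, and for i in [k] let W_i = {jk + i : 0 ≤ j ≤ n-1}. For each i in [n], let F_i ⊆ W_1 × ··· × W_k satisfy |F_i| > (t-1)n^{k-1}. Then there exist t pairwise distinct indices i_1, ..., i_t in [n] such that {F_{i_1}, ..., F_{i_t}} admits a rainbow matching. -/
/-!
Identify `W_1 × ⋯ × W_k` with `(ZMod n)^k`. Its edges split into the `n^(k-1)` perfect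
matchings `M_c = {x | x_j - x_1 = c_j for all j}`. By pigeonhole some `M_c` contains more than
`(t - 1) n` pairs `(i, x)` with `x ∈ F_i`, and the bipartite graph between the `n` families and the
`n` edges of `M_c` then has a matching of size `t` by Hall's theorem with deficiency: this picks
`t` distinct families and `t` distinct, hence disjoint, edges of `M_c`.
-/

open Finset Function

section Matching

variable {ι β : Type*} [Fintype ι] [DecidableEq β]

theorem Finset.exists_injective_choice_of_hall_deficiency (S : ι → Finset β) {d t : ℕ}
    (htd : t + d ≤ Fintype.card ι) (hS : ∀ A : Finset ι, #A ≤ #(A.biUnion S) + d) :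
    ∃ g : Fin t → ι, Injective g ∧ ∃ e : Fin t → β, Injective e ∧ ∀ s, e s ∈ S (g s) := by
  classical
  -- Hall's theorem after adding `d` new vertices adjacent to every index.
  let S' : ι → Finset (β ⊕ ℕ) := fun i => (S i).disjSum (range d)
  have hall : ∀ A : Finset ι, #A ≤ #(A.biUnion S') := by
    intro A
    obtain rfl | ⟨i₀, hi₀⟩ := A.eq_empty_or_nonempty
    · simp
    have hsub : (A.biUnion S).disjSum (range d) ⊆ A.biUnion S' := by
      rintro (b | b) hb
      · simp only [inl_mem_disjSum, mem_biUnion] at hb ⊢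
        obtain ⟨i, hi, hb⟩ := hb
        exact ⟨i, hi, inl_mem_disjSum.2 hb⟩
      · exact mem_biUnion.2 ⟨i₀, hi₀, inr_mem_disjSum.2 (inr_mem_disjSum.1 hb)⟩
    calc #A ≤ #((A.biUnion S).disjSum (range d)) := by simpa [card_disjSum] using hS A
      _ ≤ #(A.biUnion S') := card_le_card hsub
  obtain ⟨f, hf, hfS⟩ := (all_card_le_biUnion_card_iff_exists_injective S').1 hall
  let L : Finset ι := {i | ∃ b ∈ S i, f i = Sum.inl b}
  have hLc : #Lᶜ ≤ d := by
    have hmaps : Set.MapsTo f ↑Lᶜ ↑((∅ : Finset β).disjSum (range d)) := by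
      intro i hi
      simp only [coe_compl, Set.mem_compl_iff, mem_coe, L, mem_filter, mem_univ, true_and] at hi
      have := hfS i
      rcases hfi : f i with b | b <;> rw [hfi] at this hi
      · exact absurd ⟨b, inl_mem_disjSum.1 this, rfl⟩ hi
      · exact inr_mem_disjSum.2 (inr_mem_disjSum.1 this)
    simpa using card_le_card_of_injOn f hmaps hf.injOn
  have htL : Fintype.card (Fin t) ≤ Fintype.card L := by
    rw [Fintype.card_fin, Fintype.card_coe]
    rw [card_compl] at hLc
    omega
  obtain ⟨g⟩ := Embedding.nonempty_of_card_le htL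
  choose e he hfe using fun s => (mem_filter.1 (g s).2).2
  refine ⟨fun s => g s, Subtype.val_injective.comp g.injective, e, fun s s' hss' => ?_, he⟩
  exact g.injective (Subtype.val_injective (hf (by rw [hfe, hfe, hss'])))

variable {n t : ℕ}

theorem Finset.card_le_card_biUnion_add_of_lt_sum_card [DecidableEq ι] (S : ι → Finset β)
    (hS : ∀ i, #(S i) ≤ n) (hι : Fintype.card ι ≤ n) (ht : t ≤ Fintype.card ι)
    (hsum : (t - 1) * n < ∑ i, #(S i)) (A : Finset ι) :
    #A ≤ #(A.biUnion S) + (Fintype.card ι - t) := by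
  by_contra! hA
  have hAι : #A ≤ Fintype.card ι := card_le_univ A
  have hin : ∑ i ∈ A, #(S i) ≤ #A * #(A.biUnion S) := by
    simpa using sum_le_card_nsmul A _ _ fun i hi => card_le_card (subset_biUnion_of_mem S hi)
  have hout : ∑ i ∈ Aᶜ, #(S i) ≤ #Aᶜ * n := by
    simpa using sum_le_card_nsmul Aᶜ _ _ fun i _ => hS i
  rw [card_compl] at hout
  have : ∑ i, #(S i) ≤ (t - 1) * n :=
    calc ∑ i, #(S i) = ∑ i ∈ A, #(S i) + ∑ i ∈ Aᶜ, #(S i) := (sum_add_sum_compl A _).symm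
      _ ≤ n * #(A.biUnion S) + n * (Fintype.card ι - #A) := by
        gcongr
        · exact hin.trans (Nat.mul_le_mul_right _ (hAι.trans hι))
        · rw [mul_comm]; exact hout
      _ = (#(A.biUnion S) + (Fintype.card ι - #A)) * n := by ring
      _ ≤ (t - 1) * n := Nat.mul_le_mul_right _ (by omega)
  omega

/-- A bipartite graph with both sides of size at most `n` and more than `(t - 1) * n` edges
has a matching of size `t`. -/
theorem Finset.exists_injective_choice_of_lt_sum_card (S : ι → Finset β)
    (hS : ∀ i, #(S i) ≤ n) (hι : Fintype.card ι ≤ n) (hsum : (t - 1) * n < ∑ i, #(S i)) :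
    ∃ g : Fin t → ι, Injective g ∧ ∃ e : Fin t → β, Injective e ∧ ∀ s, e s ∈ S (g s) := by
  classical
  have ht : t ≤ Fintype.card ι := by
    by_contra! ht
    have : ∑ i, #(S i) ≤ Fintype.card ι * n := by
      simpa using sum_le_card_nsmul univ _ _ fun i _ => hS i
    have : Fintype.card ι * n ≤ (t - 1) * n := Nat.mul_le_mul_right _ (by omega)
    omega
  exact exists_injective_choice_of_hall_deficiency S (d := Fintype.card ι - t) (by omega)
    (card_le_card_biUnion_add_of_lt_sum_card S hS hι ht hsum)

end Matching

section ParallelClass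

variable {k n : ℕ}

/-- The `n ^ k` parallel classes of the complete `(k + 1)`-partite `(k + 1)`-graph on
`Fin (k + 1) × ZMod n` partition its edges into perfect matchings. -/
def parallelClass (x : Fin (k + 1) → ZMod n) : Fin k → ZMod n := fun j => x j.succ - x 0

theorem eq_of_parallelClass_eq_of_apply_eq {x y : Fin (k + 1) → ZMod n}
    (h : parallelClass x = parallelClass y) {p : Fin (k + 1)} (hp : x p = y p) : x = y := by
  have hshift : ∀ j, x j - y j = x 0 - y 0 := by
    refine Fin.cases rfl fun j => ?_
    have := congrFun h j
    simp only [parallelClass] at this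
    linear_combination this
  funext j
  linear_combination hshift j - hshift p + hp

variable [NeZero n]

theorem card_filter_parallelClass_le (F : Finset (Fin (k + 1) → ZMod n)) (c : Fin k → ZMod n) :
    #{x ∈ F | parallelClass x = c} ≤ n := by
  have hinj : Set.InjOn (fun x : Fin (k + 1) → ZMod n => x 0)
      ↑({x ∈ F | parallelClass x = c} : Finset _) := by
    intro x hx y hy hxy
    simp only [coe_filter, Set.mem_ofPred_eq] at hx hy
    exact eq_of_parallelClass_eq_of_apply_eq (hx.2.trans hy.2.symm) hxy
  simpa using card_le_card_of_injOn (t := univ) _ (fun _ _ => mem_coe.2 (mem_univ _)) hinj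

theorem exists_lt_sum_card_filter_parallelClass {ι : Type*} [Fintype ι] [Nonempty ι]
    (F : ι → Finset (Fin (k + 1) → ZMod n)) {m : ℕ} (hF : ∀ i, m * n ^ k < #(F i)) :
    ∃ c : Fin k → ZMod n, m * Fintype.card ι < ∑ i, #{x ∈ F i | parallelClass x = c} := by
  have hlt : ∑ _c : Fin k → ZMod n, m * Fintype.card ι
      < ∑ c : Fin k → ZMod n, ∑ i, #{x ∈ F i | parallelClass x = c} :=
    calc ∑ _c : Fin k → ZMod n, m * Fintype.card ι = ∑ _i : ι, m * n ^ k := by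
          simp only [sum_const, card_univ, Fintype.card_fun, ZMod.card, Fintype.card_fin,
            smul_eq_mul]
          ring
      _ < ∑ i, #(F i) := sum_lt_sum_of_nonempty univ_nonempty fun i _ => hF i
      _ = _ := by
          rw [sum_comm]
          exact sum_congr rfl fun i _ =>
            card_eq_sum_card_fiberwise fun _ _ => mem_coe.2 (mem_univ _)
  obtain ⟨c, -, hc⟩ := exists_lt_of_sum_lt hlt
  exact ⟨c, hc⟩

theorem exists_rainbow_matching_of_lt_card (F : Fin n → Finset (Fin (k + 1) → ZMod n)) {t : ℕ}
    (hF : ∀ i, (t - 1) * n ^ k < #(F i)) :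
    ∃ g : Fin t → Fin n, Injective g ∧ ∃ e : Fin t → Fin (k + 1) → ZMod n,
      (∀ s, e s ∈ F (g s)) ∧ Pairwise fun s s' => ∀ p, e s p ≠ e s' p := by
  obtain ⟨c, hc⟩ := exists_lt_sum_card_filter_parallelClass F hF
  rw [Fintype.card_fin] at hc
  obtain ⟨g, hg, e, he, hmem⟩ := exists_injective_choice_of_lt_sum_card _
    (fun i => card_filter_parallelClass_le (F i) c) (Fintype.card_fin n).le hc
  simp only [mem_filter] at hmem
  refine ⟨g, hg, e, fun s => (hmem s).1, fun s s' hss' p hp => hss' (he ?_)⟩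
  exact eq_of_parallelClass_eq_of_apply_eq ((hmem s).2.trans (hmem s').2.symm) hp

end ParallelClass

section Encoding

variable {k n : ℕ}

/-- Vertex `x` of part `p` is the integer `x * k + p + 1`, so that part `p` (`0 ≤ p < k`) is the
paper's `W_{p+1}`. -/
def encodeEdge (x : Fin k → ZMod n) : Fin k → ℕ := fun p => (x p).val * k + (p.val + 1)

theorem mul_add_succ_inj {k a b p q : ℕ} (hp : p < k) (hq : q < k)
    (h : a * k + (p + 1) = b * k + (q + 1)) : a = b ∧ p = q := by
  have hdiv (c r : ℕ) (hr : r < k) : (r + k * c) / k = c ∧ (r + k * c) % k = r :=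
    (Nat.div_mod_unique (by omega)).2 ⟨rfl, hr⟩
  have hpq : p + k * a = q + k * b := by linarith
  obtain ⟨ha, hp'⟩ := hdiv a p hp
  obtain ⟨hb, hq'⟩ := hdiv b q hq
  rw [hpq] at ha hp'
  exact ⟨ha.symm.trans hb, hp'.symm.trans hq'⟩

theorem mem_range_encodeEdge {f : Fin k → ℕ}
    (hf : ∀ p : Fin k, f p ∈ (range n).image fun x => x * k + (p.val + 1)) :
    f ∈ Set.range (encodeEdge : (Fin k → ZMod n) → Fin k → ℕ) := by
  simp only [mem_image, mem_range] at hf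
  choose x hxn hx using hf
  exact ⟨fun p => x p, funext fun p => by simp [encodeEdge, ZMod.val_cast_of_lt (hxn p), hx]⟩

variable [NeZero n]

theorem encodeEdge_injective : Injective (encodeEdge : (Fin k → ZMod n) → Fin k → ℕ) := by
  intro x y h
  funext p
  exact ZMod.val_injective n (mul_add_succ_inj p.isLt p.isLt (congrFun h p)).1

theorem eq_of_encodeEdge_apply_eq {x y : Fin k → ZMod n} {p q : Fin k}
    (h : encodeEdge x p = encodeEdge y q) : p = q ∧ x p = y q := by
  obtain ⟨hxy, hpq⟩ := mul_add_succ_inj p.isLt q.isLt h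
  exact ⟨Fin.ext hpq, ZMod.val_injective n hxy⟩

end Encoding

theorem rainbow_matching_some_t_families_general
    (k n t : ℕ) (hk : 0 < k) (hn : 0 < n)
    (W : Fin k → Finset ℕ)
    (hW : ∀ i : Fin k, W i = (Finset.range n).image (fun j => j * k + (i.val + 1)))
    (F : Fin n → Finset (Fin k → ℕ))
    (hFmem : ∀ i, ∀ f ∈ F i, ∀ j, f j ∈ W j)
    (hFcard : ∀ i, (F i).card > (t - 1) * n ^ (k - 1)) :
    ∃ g : Fin t → Fin n, Function.Injective g ∧
      ∃ e : Fin t → (Fin k → ℕ), (∀ i, e i ∈ F (g i)) ∧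
        ∀ i j, i ≠ j → ∀ p q, e i p ≠ e j q := by
  classical
  obtain ⟨k, rfl⟩ := Nat.exists_eq_add_one_of_ne_zero hk.ne'
  have : NeZero n := ⟨hn.ne'⟩
  let F' i := (F i).preimage (encodeEdge (n := n)) encodeEdge_injective.injOn
  have hF' : ∀ i, (t - 1) * n ^ k < #(F' i) := fun i => by
    rw [card_preimage, filter_true_of_mem fun f hf =>
      mem_range_encodeEdge fun p => hW p ▸ hFmem i f hf p]
    simpa using hFcard i
  obtain ⟨g, hg, e, he, hdisj⟩ := exists_rainbow_matching_of_lt_card F' hF'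
  refine ⟨g, hg, encodeEdge ∘ e, fun s => (mem_preimage (f := encodeEdge)).1 (he s),
    fun s s' hss' p q h => ?_⟩
  obtain ⟨rfl, h⟩ := eq_of_encodeEdge_apply_eq h
  exact hdisj hss' p h

/-- Proposition 2.2: with `W i = { j*k + i : 0 ≤ j ≤ n-1 }` (for `i ∈ [k]`) and
`F 1, …, F n ⊆ W 1 × ⋯ × W k` each of size more than `(t-1) n^(k-1)`, some `t` of
the families admit a rainbow matching. -/
theorem rainbow_matching_some_t_families
    (k n t : ℕ) (hk : 0 < k) (hn : 0 < n) (ht : 0 < t) (htn : t ≤ n)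
    (W : Fin k → Finset ℕ)
    (hW : ∀ i : Fin k, W i = (Finset.range n).image (fun j => j * k + (i.val + 1)))
    (F : Fin n → Finset (Fin k → ℕ))
    (hFmem : ∀ i, ∀ f ∈ F i, ∀ j, f j ∈ W j)
    (hFcard : ∀ i, (F i).card > (t - 1) * n ^ (k - 1)) :
    ∃ g : Fin t → Fin n, Function.Injective g ∧
      ∃ e : Fin t → (Fin k → ℕ), (∀ i, e i ∈ F (g i)) ∧
        ∀ i j, i ≠ j → ∀ p q, e i p ≠ e j q :=
  rainbow_matching_some_t_families_general k n t hk hn W hW F hFmem hFcard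
end

section
/- Let n, k be positive integers, and for each i in [n] let F_i ⊆ [n]^k (a k-partite k-graph on k disjoint copies of [n]). If |F_i| > (n-1)n^{k-1} for all i in [n], then {F_1, ..., F_n} admits a rainbow matching (which is a perfect matching of the kn vertices). -/
/-!
Use the edges `e i = (i + t 1, …, i + t k)` (addition in `ℤ/n`) for a shift `t ∈ [n]^k`; they are
automatically pairwise disjoint. For fixed `i`, the edge `e i` runs through all of `[n]^k` as `t`
does, so fewer than `n^(k-1)` shifts put `e i` outside `F i`, and the `n` indices together rule out
fewer than `n^k` shifts.
-/

open Finset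

theorem exists_const_add_mem {G ι : Type*} [AddGroup G] [Fintype G] [DecidableEq G]
    [Fintype ι] [DecidableEq ι] (F : G → Finset (ι → G))
    (h : ∑ i, #(F i)ᶜ < Fintype.card (ι → G)) :
    ∃ t : ι → G, ∀ i, Function.const ι i + t ∈ F i := by
  by_contra! hbad
  have hcover : (univ : Finset (ι → G)) ⊆
      univ.biUnion fun i => (F i)ᶜ.image (-Function.const ι i + ·) := by
    intro t _
    obtain ⟨i, hi⟩ := hbad t
    exact mem_biUnion.2 ⟨i, mem_univ i,
      mem_image.2 ⟨_, mem_compl.2 hi, neg_add_cancel_left _ t⟩⟩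
  have hcard : Fintype.card (ι → G) ≤ ∑ i, #(F i)ᶜ := calc
    Fintype.card (ι → G)
      = #(univ : Finset (ι → G)) := card_univ.symm
    _ ≤ #(univ.biUnion fun i => (F i)ᶜ.image (-Function.const ι i + ·)) := card_le_card hcover
    _ ≤ ∑ i, #((F i)ᶜ.image (-Function.const ι i + ·)) := card_biUnion_le
    _ ≤ ∑ i, #(F i)ᶜ := sum_le_sum fun i _ => card_image_le
  exact (h.trans_le hcard).false

/-- Corollary 2.3: if `F 1, …, F n ⊆ [n]^k` with `|F i| > (n-1) n^(k-1)` for each `i`,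
then `{F 1, …, F n}` admits a rainbow matching (a perfect matching of the `k`-partite
vertex set: in every partition class the chosen edges use pairwise distinct vertices). -/
theorem rainbow_perfect_matching
    (n k : ℕ) (hn : 0 < n) (hk : 0 < k)
    (F : Fin n → Finset (Fin k → Fin n))
    (hFcard : ∀ i, (F i).card > (n - 1) * n ^ (k - 1)) :
    ∃ e : Fin n → (Fin k → Fin n), (∀ i, e i ∈ F i) ∧
      ∀ i j, i ≠ j → ∀ p : Fin k, e i p ≠ e j p := by
  have : NeZero n := ⟨hn.ne'⟩
  have hnk : n * n ^ (k - 1) = n ^ k := by rw [← pow_succ', Nat.sub_add_cancel hk]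
  have hcompl (i : Fin n) : #(F i)ᶜ < n ^ (k - 1) := by
    have hlt := hFcard i
    have hle := card_le_univ (F i)
    rw [Nat.sub_one_mul] at hlt
    rw [card_compl]
    simp only [Fintype.card_fun, Fintype.card_fin, ← hnk] at hle ⊢
    generalize n * n ^ (k - 1) = m at hlt hle ⊢
    omega
  have hsum : ∑ i, #(F i)ᶜ < Fintype.card (Fin k → Fin n) := calc
    ∑ i, #(F i)ᶜ < ∑ _i : Fin n, n ^ (k - 1) :=
      sum_lt_sum_of_nonempty univ_nonempty fun i _ => hcompl i
    _ = Fintype.card (Fin k → Fin n) := by simp [hnk]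
  obtain ⟨t, ht⟩ := exists_const_add_mem F hsum
  exact ⟨fun i => Function.const _ i + t, ht, fun i j hij p h => hij (add_right_cancel h)⟩
end

section
/- Let k_1, ..., k_t and n be positive integers and ε > 0 a small constant such that k_1 ≥ k_2 ≥ ... ≥ k_t, the sum k_1 + ... + k_t ≤ n(1-ε), and n is sufficiently large (depending on k_1 and ε). For i in [t], let F_i ⊆ C([n], k_i) with |F_1|·|F_2| > C(n-1, k_1-1)·C(n-1, k_2-1) when t = 2, and ∏_{i=1}^t |F_i| > C(n-1, k_1-1)·C(n-1, k_2-1)·∏_{i=3}^t C(n, k_i) when t ≥ 3. Then {F_1, ..., F_t} admits a rainbow matching. -/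
/-!
Write the hypothesis as `k₁ k₂ ∏ C(n, kᵢ) < n² ∏ |Fᵢ|`; since `|Fᵢ| ≤ C(n, kᵢ)`, every
subproduct satisfies the same inequality. Consequently any two families beat the star bound
`C(n-1, kₐ-1) C(n-1, k_b-1)`, so for large `n` they contain disjoint members (a non-star family
forces its cross-intersecting partner to meet a set of `O(k²)` points twice); at most two families
are sparse (`|Fᵢ|³ n² < C(n, kᵢ)³`); and fewer than `2 G log₂ n` families fail to be nearly
complete (`|Fᵢ| > (1 - 1/G) C(n, kᵢ)`), where `G = (⌈1/ε⌉ + 1)^K`.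

Match a pair of families containing the sparse ones. Then add the other families that are not
nearly complete greedily: with `q = K (2 + 2 G log₂ n)`, such a family is not sparse and
`(K q)³ < n`, so it has more than `q C(n-1, kᵢ-1)` members and one of them avoids the at most `q`
points used so far. Finally add the nearly complete families greedily: at most `∑ kᵢ ≤ n - m`
points are used, where `m ≥ ε n`, and `C(n, k) ≤ G C(m, k)` gives `|Fᵢ| > C(n, k) - C(m, k)`, the
number of `k`-sets meeting them.
-/

open Finset

namespace RainbowMatching

lemma mul_choose_pred {n k : ℕ} (hk : 1 ≤ k) : n * (n - 1).choose (k - 1) = k * n.choose k := by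
  obtain ⟨j, rfl⟩ := Nat.exists_eq_add_of_le' hk
  rcases n with _ | m
  · simp
  · simpa [mul_comm] using Nat.add_one_mul_choose_eq m j

lemma mul_choose_sub_two_le {c n b : ℕ} (hb : 2 ≤ b) (hbn : b ≤ n) (h : c * (b - 1) ≤ n - 1) :
    c * (n - 2).choose (b - 2) ≤ (n - 1).choose (b - 1) := by
  obtain ⟨j, rfl⟩ := Nat.exists_eq_add_of_le' hb
  obtain ⟨m, rfl⟩ := Nat.exists_eq_add_of_le' (hb.trans hbn)
  simp only [Nat.add_sub_cancel, Nat.add_succ_sub_one] at h ⊢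
  refine Nat.le_of_mul_le_mul_right ?_ (Nat.succ_pos j)
  calc c * m.choose j * (j + 1) = c * (j + 1) * m.choose j := by ring
    _ ≤ (m + 1) * m.choose j := Nat.mul_le_mul_right _ h
    _ = (m + 1).choose (j + 1) * (j + 1) := Nat.add_one_mul_choose_eq m j

lemma mul_sub_one_mul_sq_le (a b : ℕ) :
    b * (b - 1) * (a + a * a) ^ 2 ≤ 4 * max a b ^ 6 := by
  have ha : a ≤ max a b := le_max_left a b
  have hb : b ≤ max a b := le_max_right a b
  have haa : a + a * a ≤ 2 * max a b ^ 2 := by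
    have := Nat.le_self_pow two_ne_zero (max a b)
    have : a * a ≤ max a b ^ 2 := by rw [sq]; exact Nat.mul_le_mul ha ha
    omega
  calc b * (b - 1) * (a + a * a) ^ 2 ≤ max a b * max a b * (2 * max a b ^ 2) ^ 2 := by
        gcongr
        exact (Nat.sub_le b 1).trans hb
    _ = 4 * max a b ^ 6 := by ring

lemma choose_mul_pow_le (n m k : ℕ) : n.choose k * (m + 1 - k) ^ k ≤ m.choose k * n ^ k := by
  refine Nat.le_of_mul_le_mul_left ?_ k.factorial_pos
  calc k.factorial * (n.choose k * (m + 1 - k) ^ k) = n.descFactorial k * (m + 1 - k) ^ k := by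
        rw [Nat.descFactorial_eq_factorial_mul_choose]; ring
    _ ≤ n ^ k * m.descFactorial k :=
        Nat.mul_le_mul (Nat.descFactorial_le_pow n k) (Nat.pow_sub_le_descFactorial m k)
    _ = k.factorial * (m.choose k * n ^ k) := by
        rw [Nat.descFactorial_eq_factorial_mul_choose]; ring

lemma choose_le_pow_mul_choose {n m k E : ℕ} (hn : n ≤ E * m) (hk : (E + 1) * k ≤ m) :
    n.choose k ≤ (E + 1) ^ k * m.choose k := by
  have hkm : k ≤ m := le_trans (Nat.le_mul_of_pos_left k E.succ_pos) hk
  have hn' : n ≤ (E + 1) * (m + 1 - k) := by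
    zify [hkm.trans (Nat.le_succ m)] at hk ⊢
    nlinarith
  refine Nat.le_of_mul_le_mul_right ?_ (pow_pos (show 0 < m + 1 - k by omega) k)
  calc n.choose k * (m + 1 - k) ^ k ≤ m.choose k * n ^ k := choose_mul_pow_le n m k
    _ ≤ m.choose k * ((E + 1) * (m + 1 - k)) ^ k := by gcongr
    _ = (E + 1) ^ k * m.choose k * (m + 1 - k) ^ k := by rw [mul_pow]; ring

lemma choose_lt_add_choose {n m k G f : ℕ} (hG : n.choose k ≤ G * m.choose k)
    (hf : (G - 1) * n.choose k < G * f) : n.choose k < f + m.choose k := by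
  obtain _ | G := G
  · simp at hf
  · refine Nat.lt_of_mul_lt_mul_left (a := G + 1) ?_
    simp only [Nat.add_sub_cancel] at hf
    nlinarith

lemma mul_choose_pred_lt_of_pow_three_le {n k K q f : ℕ} (hk : 1 ≤ k) (hkK : k ≤ K)
    (hq : (K * q) ^ 3 < n) (hC : 0 < n.choose k) (hf : n.choose k ^ 3 ≤ f ^ 3 * n ^ 2) :
    q * (n - 1).choose (k - 1) < f := by
  have hcube : (q * k * n.choose k) ^ 3 < (f * n) ^ 3 :=
    calc (q * k * n.choose k) ^ 3 ≤ (K * q) ^ 3 * n.choose k ^ 3 := by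
          rw [mul_pow, mul_comm K q]; gcongr
      _ < n * n.choose k ^ 3 := Nat.mul_lt_mul_of_pos_right hq (pow_pos hC 3)
      _ ≤ n * (f ^ 3 * n ^ 2) := Nat.mul_le_mul_left n hf
      _ = (f * n) ^ 3 := by ring
  refine Nat.lt_of_mul_lt_mul_right (a := n) ?_
  calc q * (n - 1).choose (k - 1) * n = q * (n * (n - 1).choose (k - 1)) := by ring
    _ = q * k * n.choose k := by rw [mul_choose_pred hk, mul_assoc]
    _ < f * n := (Nat.pow_lt_pow_iff_left three_ne_zero).1 hcube

lemma sub_one_pow_mul_two_le_pow {G : ℕ} (hG : 1 ≤ G) : (G - 1) ^ G * 2 ≤ G ^ G := by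
  have hGR : (0 : ℝ) < G := by exact_mod_cast hG
  have hexp : ((1 : ℝ) - 1 / G) ^ G ≤ Real.exp (-1) :=
    Real.one_sub_div_pow_le_exp_neg (by exact_mod_cast hG)
  have hhalf : Real.exp (-1) < 1 / 2 := Real.exp_neg_one_lt_d9.trans (by norm_num)
  have hsub : ((G - 1 : ℕ) : ℝ) = G * (1 - 1 / G) := by
    rw [Nat.cast_sub hG]; field_simp; ring
  have : ((G - 1 : ℕ) : ℝ) ^ G * 2 ≤ (G : ℝ) ^ G := by
    rw [hsub, mul_pow]
    nlinarith [pow_pos hGR G]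
  exact_mod_cast this

lemma pow_six_le_two_pow {m : ℕ} (hm : 64 ≤ m) : m ^ 6 ≤ 2 ^ m := by
  induction m, hm using Nat.le_induction with
  | base => norm_num
  | succ m hm ih =>
    have h5 : 64 * m ^ 5 ≤ m ^ 6 := by rw [pow_succ _ 5, mul_comm]; gcongr
    have hj (j : ℕ) (hj : j ≤ 5) : m ^ j ≤ m ^ 5 := Nat.pow_le_pow_right (by omega) hj
    have : (m + 1) ^ 6 ≤ 2 * m ^ 6 := by
      nlinarith [hj 0 (by norm_num), hj 1 (by norm_num), hj 2 (by norm_num), hj 3 (by norm_num),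
        hj 4 (by norm_num)]
    rw [pow_succ 2 m]
    omega

lemma pow_three_lt_of_two_pow_le {c n : ℕ} (h64 : 2 ^ 64 ≤ n) (hc : 8 * c ^ 6 < n) :
    (c * (Nat.log 2 n + 3)) ^ 3 < n := by
  have hL : 64 ≤ Nat.log 2 n := Nat.le_log_of_pow_le one_lt_two h64
  have hlog : (Nat.log 2 n + 3) ^ 6 ≤ 8 * n :=
    calc (Nat.log 2 n + 3) ^ 6 ≤ 2 ^ (Nat.log 2 n + 3) := pow_six_le_two_pow (by omega)
      _ = 8 * 2 ^ Nat.log 2 n := by ring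
      _ ≤ 8 * n := Nat.mul_le_mul_left 8 (Nat.pow_log_le_self 2 (by positivity))
  refine (Nat.pow_lt_pow_iff_left two_ne_zero).1 ?_
  calc ((c * (Nat.log 2 n + 3)) ^ 3) ^ 2 = c ^ 6 * (Nat.log 2 n + 3) ^ 6 := by ring
    _ ≤ c ^ 6 * (8 * n) := Nat.mul_le_mul_left _ hlog
    _ = 8 * c ^ 6 * n := by ring
    _ < n ^ 2 := by rw [sq]; exact Nat.mul_lt_mul_of_pos_right hc (by omega)

lemma pow_three_lt_of_mul_log {K G n : ℕ} (hG : 1 ≤ G) (h64 : 2 ^ 64 ≤ n)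
    (h : 8 * (2 * K ^ 2 * G) ^ 6 < n) :
    (K * (K * (G * (2 * Nat.log 2 n + 2) + 2))) ^ 3 < n := by
  refine lt_of_le_of_lt (Nat.pow_le_pow_left ?_ 3) (pow_three_lt_of_two_pow_le h64 h)
  calc K * (K * (G * (2 * Nat.log 2 n + 2) + 2)) = K ^ 2 * (G * (2 * Nat.log 2 n + 2) + 2) := by
        ring
    _ ≤ K ^ 2 * (2 * G * (Nat.log 2 n + 3)) := by gcongr; nlinarith
    _ = 2 * K ^ 2 * G * (Nat.log 2 n + 3) := by ring

section Counting

variable {α : Type*} [Fintype α] [DecidableEq α] {F : Finset (Finset α)} {k : ℕ}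

lemma card_filter_superset_le (hF : (F : Set (Finset α)).Sized k) (T : Finset α) :
    #{e ∈ F | T ⊆ e} ≤ (Fintype.card α - #T).choose (k - #T) := by
  calc #{e ∈ F | T ⊆ e} ≤ #(powersetCard (k - #T) (univ \ T)) := by
        refine card_le_card_of_injOn (· \ T) (fun e he => ?_) (fun e he e' he' h => ?_)
        · simp only [coe_filter, Set.mem_ofPred_eq] at he
          simp [mem_powersetCard, card_sdiff_of_subset he.2, hF he.1, sdiff_subset_sdiff]
        · simp only [coe_filter, Set.mem_ofPred_eq] at he he'
          rw [← sdiff_union_of_subset he.2, ← sdiff_union_of_subset he'.2]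
          exact congrArg (· ∪ T) h
    _ = _ := by rw [card_powersetCard, card_sdiff_of_subset (subset_univ _), card_univ]

lemma card_filter_mem_le (hF : (F : Set (Finset α)).Sized k) (x : α) :
    #{e ∈ F | x ∈ e} ≤ (Fintype.card α - 1).choose (k - 1) := by
  simpa using card_filter_superset_le hF {x}

lemma card_filter_not_disjoint_le (hF : (F : Set (Finset α)).Sized k) (W : Finset α) :
    #{e ∈ F | ¬Disjoint e W} ≤ #W * (Fintype.card α - 1).choose (k - 1) := by
  calc #{e ∈ F | ¬Disjoint e W} ≤ #(W.biUnion fun x => {e ∈ F | x ∈ e}) := by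
        refine card_le_card fun e he => ?_
        obtain ⟨heF, x, hxe, hxW⟩ := by simpa [not_disjoint_iff] using he
        exact mem_biUnion.2 ⟨x, hxW, mem_filter.2 ⟨heF, hxe⟩⟩
    _ ≤ ∑ x ∈ W, #{e ∈ F | x ∈ e} := card_biUnion_le
    _ ≤ ∑ _x ∈ W, (Fintype.card α - 1).choose (k - 1) :=
        sum_le_sum fun x _ => card_filter_mem_le hF x
    _ = _ := by rw [sum_const, smul_eq_mul]

lemma card_le_of_two_le_card_inter (hF : (F : Set (Finset α)).Sized k) (U : Finset α)
    (hU : ∀ e ∈ F, 2 ≤ #(e ∩ U)) :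
    #F ≤ #U * #U * (Fintype.card α - 2).choose (k - 2) := by
  calc #F ≤ #(U.offDiag.biUnion fun p => {e ∈ F | {p.1, p.2} ⊆ e}) := by
        refine card_le_card fun e he => mem_biUnion.2 ?_
        obtain ⟨x, hx, y, hy, hxy⟩ := one_lt_card.1 (hU e he)
        rw [mem_inter] at hx hy
        exact ⟨(x, y), mem_offDiag.2 ⟨hx.2, hy.2, hxy⟩,
          mem_filter.2 ⟨he, insert_subset hx.1 (singleton_subset_iff.2 hy.1)⟩⟩
    _ ≤ ∑ p ∈ U.offDiag, #{e ∈ F | {p.1, p.2} ⊆ e} := card_biUnion_le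
    _ ≤ ∑ _p ∈ U.offDiag, (Fintype.card α - 2).choose (k - 2) := sum_le_sum fun p hp => by
        simpa [card_pair (mem_offDiag.1 hp).2.2] using card_filter_superset_le hF {p.1, p.2}
    _ ≤ _ := by rw [sum_const, smul_eq_mul, offDiag_card]; gcongr; exact Nat.sub_le _ _

end Counting

section CrossIntersecting

variable {α : Type*} [DecidableEq α] {A B : Finset (Finset α)} {a b : ℕ}

lemma exists_two_le_card_inter_of_not_star (hA : (A : Set (Finset α)).Sized a)
    (hAB : ∀ x ∈ A, ∀ y ∈ B, ¬Disjoint x y) {e₀ : Finset α} (he₀ : e₀ ∈ A)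
    (hstar : ∀ x, ∃ e ∈ A, x ∉ e) :
    ∃ U : Finset α, #U ≤ a + a * a ∧ ∀ f ∈ B, 2 ≤ #(f ∩ U) := by
  choose ex hexA hex using hstar
  refine ⟨e₀ ∪ e₀.biUnion ex, ?_, fun f hf => ?_⟩
  · calc #(e₀ ∪ e₀.biUnion ex) ≤ #e₀ + ∑ x ∈ e₀, #(ex x) :=
          (card_union_le _ _).trans (Nat.add_le_add_left card_biUnion_le _)
      _ = a + a * a := by simp [hA he₀, hA (hexA _)]
  · obtain ⟨x, hxe₀, hxf⟩ := not_disjoint_iff.1 (hAB e₀ he₀ f hf)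
    obtain ⟨z, hzx, hzf⟩ := not_disjoint_iff.1 (hAB (ex x) (hexA x) f hf)
    refine one_lt_card.2 ⟨x, mem_inter.2 ⟨hxf, mem_union_left _ hxe₀⟩, z,
      mem_inter.2 ⟨hzf, mem_union_right _ (mem_biUnion.2 ⟨x, hxe₀, hzx⟩)⟩, ?_⟩
    rintro rfl
    exact hex x hzx

variable [Fintype α]

lemma card_mul_card_le_of_not_star (hA : (A : Set (Finset α)).Sized a)
    (hB : (B : Set (Finset α)).Sized b) (hn : b * (b - 1) * (a + a * a) ^ 2 < Fintype.card α)
    (hAB : ∀ x ∈ A, ∀ y ∈ B, ¬Disjoint x y) (hstar : ∀ x, ∃ e ∈ A, x ∉ e) :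
    #A * #B ≤ (Fintype.card α - 1).choose (a - 1) * (Fintype.card α - 1).choose (b - 1) := by
  obtain rfl | ⟨e₀, he₀⟩ := A.eq_empty_or_nonempty
  · simp
  obtain rfl | ⟨f₀, hf₀⟩ := B.eq_empty_or_nonempty
  · simp
  obtain ⟨U, hU, hBU⟩ := exists_two_le_card_inter_of_not_star hA hAB he₀ hstar
  have hb2 : 2 ≤ b := (hBU f₀ hf₀).trans ((card_le_card inter_subset_left).trans (hB hf₀).le)
  have hbn : b ≤ Fintype.card α := (hB hf₀) ▸ card_le_univ f₀
  -- every member of `A` meets the fixed member `f₀` of `B`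
  have hAcard : #A ≤ b * (Fintype.card α - 1).choose (a - 1) := by
    simpa [filter_true_of_mem fun e he => hAB e he f₀ hf₀, hB hf₀] using
      card_filter_not_disjoint_le hA f₀
  have hBcard : #B ≤ (a + a * a) ^ 2 * (Fintype.card α - 2).choose (b - 2) := by
    calc #B ≤ #U * #U * (Fintype.card α - 2).choose (b - 2) := card_le_of_two_le_card_inter hB U hBU
      _ ≤ _ := by rw [sq]; gcongr
  have hkey : b * (a + a * a) ^ 2 * (Fintype.card α - 2).choose (b - 2) ≤
      (Fintype.card α - 1).choose (b - 1) :=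
    mul_choose_sub_two_le hb2 hbn (by
      calc b * (a + a * a) ^ 2 * (b - 1) = b * (b - 1) * (a + a * a) ^ 2 := by ring
        _ ≤ Fintype.card α - 1 := by omega)
  calc #A * #B ≤ b * (Fintype.card α - 1).choose (a - 1) *
        ((a + a * a) ^ 2 * (Fintype.card α - 2).choose (b - 2)) := Nat.mul_le_mul hAcard hBcard
    _ = (Fintype.card α - 1).choose (a - 1) *
        (b * (a + a * a) ^ 2 * (Fintype.card α - 2).choose (b - 2)) := by ring
    _ ≤ _ := Nat.mul_le_mul_left _ hkey

theorem exists_disjoint_of_choose_mul_choose_lt (hA : (A : Set (Finset α)).Sized a)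
    (hB : (B : Set (Finset α)).Sized b) (hn : 4 * max a b ^ 6 < Fintype.card α)
    (h : (Fintype.card α - 1).choose (a - 1) * (Fintype.card α - 1).choose (b - 1) < #A * #B) :
    ∃ x ∈ A, ∃ y ∈ B, Disjoint x y := by
  by_contra! hAB
  by_cases hAstar : ∀ x, ∃ e ∈ A, x ∉ e
  · exact h.not_ge <| card_mul_card_le_of_not_star hA hB
      ((mul_sub_one_mul_sq_le a b).trans_lt hn) hAB hAstar
  by_cases hBstar : ∀ x, ∃ e ∈ B, x ∉ e
  · refine h.not_ge ?_
    rw [mul_comm, mul_comm ((Fintype.card α - 1).choose (a - 1))]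
    exact card_mul_card_le_of_not_star hB hA
      ((mul_sub_one_mul_sq_le b a).trans_lt (max_comm a b ▸ hn))
      (fun y hy x hx hxy => hAB x hx y hy hxy.symm) hBstar
  push Not at hAstar hBstar
  obtain ⟨x, hx⟩ := hAstar
  obtain ⟨y, hy⟩ := hBstar
  refine h.not_ge (Nat.mul_le_mul ?_ ?_)
  · simpa [filter_true_of_mem hx] using card_filter_mem_le hA x
  · simpa [filter_true_of_mem hy] using card_filter_mem_le hB y

end CrossIntersecting

section Greedy

variable {α ι : Type*}

def IsRainbowMatching (F : ι → Finset (Finset α)) (I : Finset ι) (e : ι → Finset α) : Prop :=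
  (∀ i ∈ I, e i ∈ F i) ∧ (I : Set ι).PairwiseDisjoint e

def AvoidsSetsOfCardLE (F : Finset (Finset α)) (q : ℕ) : Prop :=
  ∀ W : Finset α, #W ≤ q → ∃ x ∈ F, Disjoint x W

variable {F : ι → Finset (Finset α)} {I J : Finset ι} {e : ι → Finset α}

lemma isRainbowMatching_empty : IsRainbowMatching F ∅ e := ⟨by simp, by simp⟩

variable [DecidableEq ι]

lemma IsRainbowMatching.insert_update (he : IsRainbowMatching F I e) {a : ι} (ha : a ∉ I)
    {x : Finset α} (hx : x ∈ F a) (hxe : ∀ i ∈ I, Disjoint x (e i)) :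
    IsRainbowMatching F (insert a I) (Function.update e a x) := by
  have hupd : ∀ i ∈ I, Function.update e a x i = e i := fun i hi =>
    Function.update_of_ne (ne_of_mem_of_not_mem hi ha) _ _
  refine ⟨fun i hi => ?_, ?_⟩
  · obtain rfl | hi := mem_insert.1 hi
    · simpa using hx
    · exact hupd i hi ▸ he.1 i hi
  · rw [coe_insert, Set.pairwiseDisjoint_insert]
    refine ⟨he.2.mono_on fun i hi => (hupd i hi).le, fun j hj _ => ?_⟩
    simpa [hupd j hj] using hxe j hj

lemma IsRainbowMatching.exists_union [DecidableEq α] {k : ι → ℕ} {q : ℕ}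
    (hF : ∀ i, (F i : Set (Finset α)).Sized (k i)) (he : IsRainbowMatching F J e)
    (hq : ∑ i ∈ J ∪ I, k i ≤ q) (hI : ∀ i ∈ I \ J, AvoidsSetsOfCardLE (F i) q) :
    ∃ e', IsRainbowMatching F (J ∪ I) e' := by
  induction I using Finset.induction_on with
  | empty => exact ⟨e, by simpa using he⟩
  | insert a I _ ih =>
    have hsub : J ∪ I ⊆ J ∪ insert a I := union_subset_union_right (subset_insert a I)
    obtain ⟨e', he'⟩ := ih ((sum_le_sum_of_subset hsub).trans hq)
      fun i hi => hI i (sdiff_subset_sdiff (subset_insert a I) subset_rfl hi)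
    rw [union_insert]
    by_cases haJI : a ∈ J ∪ I
    · exact ⟨e', by rwa [insert_eq_of_mem haJI]⟩
    have hW : #((J ∪ I).biUnion e') ≤ q :=
      calc #((J ∪ I).biUnion e') ≤ ∑ i ∈ J ∪ I, #(e' i) := card_biUnion_le
        _ = ∑ i ∈ J ∪ I, k i := sum_congr rfl fun i hi => hF i (he'.1 i hi)
        _ ≤ q := (sum_le_sum_of_subset hsub).trans hq
    obtain ⟨x, hx, hxW⟩ := hI a (mem_sdiff.2 ⟨mem_insert_self a I,
      fun haJ => haJI (mem_union_left I haJ)⟩) _ hW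
    exact ⟨_, he'.insert_update haJI hx fun i hi =>
      disjoint_of_subset_right (subset_biUnion_of_mem e' hi) hxW⟩

lemma exists_isRainbowMatching_pair_superset [Fintype ι] {T : Finset ι} (hT : #T ≤ 2)
    (hι : 2 ≤ Fintype.card ι) (hpair : ∀ i j, i ≠ j → ∃ x ∈ F i, ∃ y ∈ F j, Disjoint x y) :
    ∃ S e, T ⊆ S ∧ #S = 2 ∧ IsRainbowMatching F S e := by
  obtain ⟨S, hTS, hS⟩ := exists_superset_card_eq hT hι
  obtain ⟨a, b, hab, rfl⟩ := card_eq_two.1 hS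
  obtain ⟨x, hx, y, hy, hxy⟩ := hpair a b hab
  have := ((isRainbowMatching_empty (e := fun _ => ∅)).insert_update (notMem_empty b) hy
    (by simp)).insert_update (by simpa using hab) hx (by simpa using hxy)
  exact ⟨_, _, hTS, hS, by rwa [insert_empty] at this⟩

end Greedy

section Avoiding

variable {α : Type*} [Fintype α] [DecidableEq α] {F : Finset (Finset α)} {k q : ℕ}

lemma avoidsSetsOfCardLE_of_mul_choose_lt (hF : (F : Set (Finset α)).Sized k)
    (h : q * (Fintype.card α - 1).choose (k - 1) < #F) : AvoidsSetsOfCardLE F q := by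
  intro W hW
  by_contra! hFW
  have := card_filter_not_disjoint_le hF W
  rw [filter_true_of_mem hFW] at this
  exact h.not_ge (this.trans (Nat.mul_le_mul_right _ hW))

lemma avoidsSetsOfCardLE_of_choose_lt (hF : (F : Set (Finset α)).Sized k)
    (h : (Fintype.card α).choose k < #F + (Fintype.card α - q).choose k) :
    AvoidsSetsOfCardLE F q := by
  intro W hW
  obtain ⟨x, hx⟩ := inter_nonempty_of_card_lt_card_add_card (subset_powersetCard_univ_iff.2 hF)
    (powersetCard_mono (subset_univ (univ \ W)) : powersetCard k (univ \ W) ⊆ _) (by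
      rw [card_powersetCard, card_powersetCard, card_sdiff_of_subset (subset_univ W), card_univ]
      exact h.trans_le (Nat.add_le_add_left (Nat.choose_le_choose k (by omega)) _))
  rw [mem_inter, mem_powersetCard] at hx
  exact ⟨x, hx.1, disjoint_of_subset_left hx.2.1 sdiff_disjoint⟩

end Avoiding

section Products

variable {ι : Type*} {a b : ι → ℕ} {n : ℕ}

lemma card_lt_of_prod_lt {G : ℕ} (hG : 1 ≤ G) (S : Finset ι)
    (hS : ∀ i ∈ S, G * a i ≤ (G - 1) * b i) (h : ∏ i ∈ S, b i < n ^ 2 * ∏ i ∈ S, a i) :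
    #S < G * (2 * Nat.log 2 n + 2) := by
  by_contra! hle
  obtain ⟨r, hr⟩ := Nat.exists_eq_add_of_le hle
  have hprod : G ^ #S * ∏ i ∈ S, a i ≤ (G - 1) ^ #S * ∏ i ∈ S, b i := by
    simpa [prod_mul_distrib] using prod_le_prod' hS
  have hn : n ^ 2 ≤ 2 ^ (2 * Nat.log 2 n + 2) := by
    rw [show 2 * Nat.log 2 n + 2 = (Nat.log 2 n + 1) * 2 by ring, pow_mul]
    exact Nat.pow_le_pow_left (Nat.lt_pow_succ_log_self one_lt_two n).le 2
  have hpow : (G - 1) ^ #S * 2 ^ (2 * Nat.log 2 n + 2) ≤ G ^ #S := by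
    calc (G - 1) ^ #S * 2 ^ (2 * Nat.log 2 n + 2)
        = ((G - 1) ^ G * 2) ^ (2 * Nat.log 2 n + 2) * (G - 1) ^ r := by rw [hr]; ring
      _ ≤ (G ^ G) ^ (2 * Nat.log 2 n + 2) * G ^ r := by
        gcongr
        · exact sub_one_pow_mul_two_le_pow hG
        · exact Nat.sub_le G 1
      _ = G ^ #S := by rw [hr]; ring
  have := calc G ^ #S * ∏ i ∈ S, b i
      < G ^ #S * (n ^ 2 * ∏ i ∈ S, a i) := Nat.mul_lt_mul_of_pos_left h (by positivity)
    _ = n ^ 2 * (G ^ #S * ∏ i ∈ S, a i) := by ring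
    _ ≤ 2 ^ (2 * Nat.log 2 n + 2) * ((G - 1) ^ #S * ∏ i ∈ S, b i) := by gcongr
    _ = (G - 1) ^ #S * 2 ^ (2 * Nat.log 2 n + 2) * ∏ i ∈ S, b i := by ring
    _ ≤ G ^ #S * ∏ i ∈ S, b i := by gcongr
  exact lt_irrefl _ this

variable [Fintype ι]

lemma card_filter_pow_three_lt_le_two (h : ∀ S : Finset ι, ∏ i ∈ S, b i < n ^ 2 * ∏ i ∈ S, a i) :
    #{i | a i ^ 3 * n ^ 2 < b i ^ 3} ≤ 2 := by
  by_contra! hT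
  obtain ⟨S, hST, hS⟩ := exists_subset_card_eq (show 3 ≤ #{i | a i ^ 3 * n ^ 2 < b i ^ 3} by omega)
  have hle : ∏ i ∈ S, (a i ^ 3 * n ^ 2) ≤ ∏ i ∈ S, b i ^ 3 :=
    prod_le_prod' fun i hi => (mem_filter.1 (hST hi)).2.le
  simp only [prod_mul_distrib, prod_pow, prod_const, hS] at hle
  have hlt := Nat.pow_lt_pow_left (h S) three_ne_zero
  rw [mul_pow, ← pow_mul, mul_comm] at hlt
  exact hlt.not_ge (by simpa [← pow_mul] using hle)

variable [DecidableEq ι]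

lemma mul_prod_lt_of_mul_prod_univ_lt {c d : ℕ} (hab : ∀ i, a i ≤ b i)
    (h : c * ∏ i, b i < d * ∏ i, a i) (S : Finset ι) :
    c * ∏ i ∈ S, b i < d * ∏ i ∈ S, a i := by
  refine Nat.lt_of_mul_lt_mul_left (a := ∏ i ∈ univ \ S, b i) ?_
  calc (∏ i ∈ univ \ S, b i) * (c * ∏ i ∈ S, b i) = c * ∏ i, b i := by
        rw [← prod_sdiff (subset_univ S)]; ring
    _ < d * ∏ i, a i := h
    _ = d * ((∏ i ∈ univ \ S, a i) * ∏ i ∈ S, a i) := by rw [prod_sdiff (subset_univ S)]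
    _ ≤ d * ((∏ i ∈ univ \ S, b i) * ∏ i ∈ S, a i) := by gcongr with i; exact hab i
    _ = (∏ i ∈ univ \ S, b i) * (d * ∏ i ∈ S, a i) := by ring

end Products

theorem exists_isRainbowMatching_univ {α ι : Type*} [Fintype α] [DecidableEq α] [Fintype ι]
    [DecidableEq ι] {F : ι → Finset (Finset α)} {k : ι → ℕ} {K G m : ℕ}
    (hF : ∀ i, (F i : Set (Finset α)).Sized (k i)) (hk : ∀ i, 1 ≤ k i) (hkK : ∀ i, k i ≤ K)
    (hι : 2 ≤ Fintype.card ι) (hsum : ∑ i, k i + m ≤ Fintype.card α)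
    (hG : ∀ i, (Fintype.card α).choose (k i) ≤ G * m.choose (k i))
    (hn : (K * (K * (G * (2 * Nat.log 2 (Fintype.card α) + 2) + 2))) ^ 3 < Fintype.card α)
    (hpair : ∀ i j, i ≠ j → ∃ x ∈ F i, ∃ y ∈ F j, Disjoint x y)
    (hprod : ∀ S : Finset ι,
      ∏ i ∈ S, (Fintype.card α).choose (k i) < Fintype.card α ^ 2 * ∏ i ∈ S, #(F i)) :
    ∃ e, IsRainbowMatching F univ e := by
  set n := Fintype.card α
  set M := G * (2 * Nat.log 2 n + 2)
  have hkn (i : ι) : k i ≤ n :=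
    (single_le_sum (fun j _ => Nat.zero_le (k j)) (mem_univ i)).trans (by omega)
  have hC (i : ι) : 0 < n.choose (k i) := Nat.choose_pos (hkn i)
  obtain ⟨i₀⟩ : Nonempty ι := Fintype.card_pos_iff.1 (by omega)
  have hG1 : 1 ≤ G := Nat.pos_of_mul_pos_right ((hC i₀).trans_le (hG i₀))
  obtain ⟨S, e₀, hTS, hS, he₀⟩ :=
    exists_isRainbowMatching_pair_superset (card_filter_pow_three_lt_le_two hprod) hι hpair
  set NG := ({i | G * #(F i) ≤ (G - 1) * n.choose (k i)} : Finset ι)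
  have hNG : #NG < M := card_lt_of_prod_lt hG1 NG (fun i hi => (mem_filter.1 hi).2) (hprod NG)
  have hsum₁ : ∑ i ∈ S ∪ NG, k i ≤ K * (M + 2) :=
    calc ∑ i ∈ S ∪ NG, k i ≤ #(S ∪ NG) * K := by
          simpa using sum_le_card_nsmul _ k K fun i _ => hkK i
      _ ≤ K * (M + 2) := by
          rw [mul_comm]
          exact Nat.mul_le_mul_left K ((card_union_le _ _).trans (by omega))
  have hav₁ : ∀ i ∈ NG \ S, AvoidsSetsOfCardLE (F i) (K * (M + 2)) := fun i hi => by
    refine avoidsSetsOfCardLE_of_mul_choose_lt (hF i) (mul_choose_pred_lt_of_pow_three_le (hk i)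
      (hkK i) hn (hC i) (not_lt.1 fun hsparse => ?_))
    exact (mem_sdiff.1 hi).2 (hTS (mem_filter.2 ⟨mem_univ i, hsparse⟩))
  obtain ⟨e₁, he₁⟩ := he₀.exists_union hF hsum₁ hav₁
  have hav₂ : ∀ i ∈ univ \ (S ∪ NG), AvoidsSetsOfCardLE (F i) (n - m) := fun i hi => by
    have hfull : (G - 1) * n.choose (k i) < G * #(F i) := not_le.1 fun h =>
      (mem_sdiff.1 hi).2 (mem_union_right _ (mem_filter.2 ⟨mem_univ i, h⟩))
    refine avoidsSetsOfCardLE_of_choose_lt (hF i) ?_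
    rw [Nat.sub_sub_self (by omega)]
    exact choose_lt_add_choose (hG i) hfull
  obtain ⟨e₂, he₂⟩ := he₁.exists_union hF (by rw [union_eq_right.2 (subset_univ _)]; omega) hav₂
  exact ⟨e₂, by rwa [union_eq_right.2 (subset_univ _)] at he₂⟩

theorem exists_isRainbowMatching_univ_of_mul_prod_lt {α ι : Type*} [Fintype α] [DecidableEq α]
    [Fintype ι] [DecidableEq ι] {F : ι → Finset (Finset α)} {k : ι → ℕ} {K G m c : ℕ}
    (hF : ∀ i, (F i : Set (Finset α)).Sized (k i)) (hk : ∀ i, 1 ≤ k i) (hkK : ∀ i, k i ≤ K)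
    (hι : 2 ≤ Fintype.card ι) (hsum : ∑ i, k i + m ≤ Fintype.card α)
    (hG : ∀ i, (Fintype.card α).choose (k i) ≤ G * m.choose (k i))
    (hK : 4 * K ^ 6 < Fintype.card α)
    (hn : (K * (K * (G * (2 * Nat.log 2 (Fintype.card α) + 2) + 2))) ^ 3 < Fintype.card α)
    (hc : ∀ i j, i ≠ j → k i * k j ≤ c)
    (hprod : c * ∏ i, (Fintype.card α).choose (k i) < Fintype.card α ^ 2 * ∏ i, #(F i)) :
    ∃ e, IsRainbowMatching F univ e := by
  set n := Fintype.card α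
  have hsub := mul_prod_lt_of_mul_prod_univ_lt (fun i => (hF i).card_le) hprod
  obtain ⟨a, b, hab⟩ := Fintype.exists_pair_of_one_lt_card hι
  have hc1 : 1 ≤ c := (Nat.mul_le_mul (hk a) (hk b)).trans (hc a b hab)
  refine exists_isRainbowMatching_univ hF hk hkK hι hsum hG hn (fun i j hij => ?_)
    fun S => (Nat.le_mul_of_pos_left _ hc1).trans_lt (hsub S)
  refine exists_disjoint_of_choose_mul_choose_lt (hF i) (hF j) ?_ ?_
  · exact lt_of_le_of_lt (by gcongr; exact max_le (hkK i) (hkK j)) hK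
  · refine Nat.lt_of_mul_lt_mul_left (a := n ^ 2) ?_
    calc n ^ 2 * ((n - 1).choose (k i - 1) * (n - 1).choose (k j - 1))
        = (n * (n - 1).choose (k i - 1)) * (n * (n - 1).choose (k j - 1)) := by ring
      _ = k i * k j * ∏ l ∈ {i, j}, n.choose (k l) := by
        rw [mul_choose_pred (hk i), mul_choose_pred (hk j), prod_pair hij]; ring
      _ ≤ c * ∏ l ∈ {i, j}, n.choose (k l) := Nat.mul_le_mul_right _ (hc i j hij)
      _ < n ^ 2 * ∏ l ∈ {i, j}, #(F l) := hsub {i, j}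
      _ = n ^ 2 * (#(F i) * #(F j)) := by rw [prod_pair hij]

lemma le_mul_sub_of_le_mul_one_sub {ε : ℝ} (hε : 0 < ε) {E n s : ℕ} (hE : 1 / ε ≤ E)
    (h : (s : ℝ) ≤ n * (1 - ε)) : s ≤ n ∧ n ≤ E * (n - s) := by
  have hsn : s ≤ n := by
    have : (s : ℝ) ≤ n := h.trans (by nlinarith [Nat.cast_nonneg (α := ℝ) n])
    exact_mod_cast this
  refine ⟨hsn, ?_⟩
  have : (n : ℝ) ≤ E * ((n - s : ℕ) : ℝ) := by
    rw [Nat.cast_sub hsn]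
    calc (n : ℝ) = 1 / ε * (ε * n) := by field_simp
      _ ≤ E * (n - s) := mul_le_mul hE (by linarith) (by positivity) (by positivity)
  exact_mod_cast this

lemma prod_univ_fin_eq_mul_mul_prod {M : Type*} [CommMonoid M] {t : ℕ} (ht : 1 < t)
    (f : Fin t → M) :
    ∏ i, f i =
      f ⟨0, by omega⟩ * f ⟨1, ht⟩ * ∏ i ∈ univ.filter (fun i : Fin t => 2 ≤ i.val), f i := by
  rw [← prod_filter_mul_prod_filter_not univ (fun i : Fin t => 2 ≤ i.val), mul_comm]
  congr 1
  have : univ.filter (fun i : Fin t => ¬ 2 ≤ i.val) = {⟨0, by omega⟩, ⟨1, ht⟩} := by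
    ext ⟨i, hi⟩
    simp only [mem_filter, mem_univ, true_and, mem_insert, mem_singleton, Fin.mk.injEq]
    omega
  rw [this, prod_pair (by simp)]

lemma mul_le_zero_mul_one_of_antitone {t : ℕ} (ht : 1 < t) {k : Fin t → ℕ} (hk : Antitone k)
    {i j : Fin t} (hij : i ≠ j) : k i * k j ≤ k ⟨0, by omega⟩ * k ⟨1, ht⟩ := by
  have key {i j : Fin t} (hij : i < j) : k i * k j ≤ k ⟨0, by omega⟩ * k ⟨1, ht⟩ :=
    Nat.mul_le_mul (hk (Nat.zero_le _)) (hk (by simp [Fin.le_def]; omega))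
  rcases lt_or_gt_of_ne hij with h | h
  · exact key h
  · rw [mul_comm]; exact key h

lemma mul_mul_prod_choose_lt {t n : ℕ} (ht : 1 < t) {k f : Fin t → ℕ} (hk : ∀ i, 1 ≤ k i)
    (hn : 0 < n)
    (h : (n - 1).choose (k ⟨0, by omega⟩ - 1) * (n - 1).choose (k ⟨1, ht⟩ - 1) *
      ∏ i ∈ univ.filter (fun i : Fin t => 2 ≤ i.val), n.choose (k i) < ∏ i, f i) :
    k ⟨0, by omega⟩ * k ⟨1, ht⟩ * ∏ i, n.choose (k i) < n ^ 2 * ∏ i, f i := by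
  calc k ⟨0, by omega⟩ * k ⟨1, ht⟩ * ∏ i, n.choose (k i)
      = n * (n - 1).choose (k ⟨0, by omega⟩ - 1) * (n * (n - 1).choose (k ⟨1, ht⟩ - 1)) *
          ∏ i ∈ univ.filter (fun i : Fin t => 2 ≤ i.val), n.choose (k i) := by
        rw [prod_univ_fin_eq_mul_mul_prod ht, mul_choose_pred (hk _), mul_choose_pred (hk _)]; ring
    _ = n ^ 2 * ((n - 1).choose (k ⟨0, by omega⟩ - 1) * (n - 1).choose (k ⟨1, ht⟩ - 1) *
          ∏ i ∈ univ.filter (fun i : Fin t => 2 ≤ i.val), n.choose (k i)) := by ring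
    _ < n ^ 2 * ∏ i, f i := Nat.mul_lt_mul_of_pos_left h (by positivity)

end RainbowMatching

open RainbowMatching

/-- Lemma 3.3: product-type condition for rainbow matchings when
`k₁ + ⋯ + k_t ≤ n(1-ε)` and `n` is sufficiently large (depending on `k₁ = K` and `ε`). -/
theorem rainbow_matching_product_eps
    (K : ℕ) (ε : ℝ) (hε0 : 0 < ε) :
    ∃ N : ℕ, ∀ n ≥ N, ∀ t : ℕ, ∀ ht : 2 ≤ t, ∀ k : Fin t → ℕ,
      k ⟨0, by omega⟩ = K →
      (∀ i j : Fin t, i ≤ j → k j ≤ k i) →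
      (∀ i, 1 ≤ k i) →
      ((∑ i : Fin t, (k i : ℝ)) ≤ n * (1 - ε)) →
      ∀ F : Fin t → Finset (Finset (Fin n)),
      (∀ i, ∀ e ∈ F i, e.card = k i) →
      (t = 2 →
        (F ⟨0, by omega⟩).card * (F ⟨1, by omega⟩).card >
          (n - 1).choose (k ⟨0, by omega⟩ - 1) * (n - 1).choose (k ⟨1, by omega⟩ - 1)) →
      (3 ≤ t →
        ∏ i : Fin t, (F i).card >
          (n - 1).choose (k ⟨0, by omega⟩ - 1) * (n - 1).choose (k ⟨1, by omega⟩ - 1) *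
            ∏ i ∈ Finset.univ.filter (fun i : Fin t => 2 ≤ i.val), n.choose (k i)) →
      ∃ e : Fin t → Finset (Fin n), (∀ i, e i ∈ F i) ∧
        ∀ i j, i ≠ j → Disjoint (e i) (e j) := by
  set E := ⌈1 / ε⌉₊
  have hE : 1 ≤ E := Nat.ceil_pos.2 (by positivity)
  have hEε : 1 / ε ≤ E := Nat.le_ceil _
  set G := (E + 1) ^ K
  refine ⟨2 ^ 64 + 8 * (2 * K ^ 2 * G) ^ 6 + 4 * K ^ 6 + E * (E + 1) * K + 1,
    fun n hn t ht k hk0 hmono hk1 hsum F hF hyp2 hyp3 => ?_⟩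
  have hkK (i : Fin t) : k i ≤ K := hk0 ▸ hmono _ i (Nat.zero_le _)
  obtain ⟨hsn, hnm⟩ :=
    le_mul_sub_of_le_mul_one_sub hε0 hEε (s := ∑ i, k i) (by exact_mod_cast hsum)
  have hm : (E + 1) * K ≤ n - ∑ i, k i :=
    Nat.le_of_mul_le_mul_left (by rw [← mul_assoc]; omega) hE
  have hlt : (n - 1).choose (k ⟨0, by omega⟩ - 1) * (n - 1).choose (k ⟨1, by omega⟩ - 1) *
      ∏ i ∈ univ.filter (fun i : Fin t => 2 ≤ i.val), n.choose (k i) < ∏ i, #(F i) := by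
    obtain rfl | ht3 := (show t = 2 ∨ 3 ≤ t by omega)
    · simpa [filter_false_of_mem fun (i : Fin 2) _ => not_le.2 i.isLt, Fin.prod_univ_two]
        using hyp2 rfl
    · exact hyp3 ht3
  have hlog := pow_three_lt_of_mul_log (K := K) (G := G) (n := n) (Nat.one_le_pow _ _ E.succ_pos)
    (by omega) (by omega)
  obtain ⟨e, he⟩ := exists_isRainbowMatching_univ_of_mul_prod_lt (α := Fin n) (K := K) (G := G)
    (m := n - ∑ i, k i) (fun i e he => hF i e he) hk1 hkK (by simpa using ht) (by simp; omega)
    (fun i => by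
      simpa using (choose_le_pow_mul_choose hnm ((Nat.mul_le_mul_left _ (hkK i)).trans hm)).trans
        (Nat.mul_le_mul_right _ (Nat.pow_le_pow_right E.succ_pos (hkK i))))
    (by simp; omega) (by simpa using hlog)
    (fun i j hij => mul_le_zero_mul_one_of_antitone (by omega) hmono hij)
    (by simpa using mul_mul_prod_choose_lt (by omega) hk1 (by omega) hlt)
  exact ⟨e, fun i => he.1 i (mem_univ i), fun i j hij => he.2 (by simp) (by simp) hij⟩
end

section
/- Let n, k, t, r be positive integers with r ≤ k, and let U_1, ..., U_k be disjoint n-sets. Let F be an r-partite r-graph on r of the classes U_{i_1}, ..., U_{i_r} with |F| > (t-1)n^{r-1}, and let X be a set of s-1 vertices (s ≤ t) with |X ∩ U_{i_1}| = a, |X ∩ U_{i_2}| = b (case r = 2), a ≥ b, a + b ≤ s - 1. Then the bipartite graph F - X (edges avoiding X) has more than (t-s)n + ab edges, and hence contains a vertex of degree greater than t - s. -/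
/-! The edges meeting `X` lie in `(X ∩ U₁) × U₂ ∪ U₁ × (X ∩ U₂)`, a set of `an + bn - ab` pairs,
so more than `(t - 1)n - (a + b)n + ab ≥ (t - s)n + ab` edges avoid `X`; spread over the `n`
vertices of `U₁`, they give one of degree greater than `t - s`. -/

open Finset

section ProductDeletion

variable {α β : Type*} [DecidableEq α] [DecidableEq β]
  {s A : Finset α} {t B : Finset β} {F : Finset (α × β)}

theorem card_filter_fst_mem_or_snd_mem_add_le (hF : F ⊆ s ×ˢ t) :
    #{p ∈ F | p.1 ∈ A ∨ p.2 ∈ B} + #(A ∩ s) * #(B ∩ t) ≤ #(A ∩ s) * #t + #s * #(B ∩ t) := by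
  have hsub : {p ∈ F | p.1 ∈ A ∨ p.2 ∈ B} ⊆ (A ∩ s) ×ˢ t ∪ s ×ˢ (B ∩ t) := by
    intro p hp
    obtain ⟨hpF, hpAB⟩ := mem_filter.mp hp
    obtain ⟨hps, hpt⟩ := mem_product.mp (hF hpF)
    rcases hpAB with hpA | hpB
    · exact mem_union_left _ (mem_product.mpr ⟨mem_inter.mpr ⟨hpA, hps⟩, hpt⟩)
    · exact mem_union_right _ (mem_product.mpr ⟨hps, mem_inter.mpr ⟨hpB, hpt⟩⟩)
  have hunion := card_union_add_card_inter ((A ∩ s) ×ˢ t) (s ×ˢ (B ∩ t))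
  rw [product_inter_product, inter_eq_left.mpr inter_subset_right,
    inter_eq_right.mpr inter_subset_right] at hunion
  simp only [card_product] at hunion
  have := card_le_card hsub
  omega

theorem card_add_le_card_filter_fst_notMem_and_snd_notMem (hF : F ⊆ s ×ˢ t) :
    #F + #(A ∩ s) * #(B ∩ t) ≤
      #{p ∈ F | p.1 ∉ A ∧ p.2 ∉ B} + #(A ∩ s) * #t + #s * #(B ∩ t) := by
  have hsplit := card_filter_add_card_filter_not (s := F) (fun p => p.1 ∉ A ∧ p.2 ∉ B)
  have hmeet : {p ∈ F | ¬(p.1 ∉ A ∧ p.2 ∉ B)} = {p ∈ F | p.1 ∈ A ∨ p.2 ∈ B} :=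
    filter_congr fun p _ => by tauto
  have := card_filter_fst_mem_or_snd_mem_add_le (A := A) (B := B) hF
  rw [hmeet] at hsplit
  omega

end ProductDeletion

theorem exists_lt_card_filter_incident_of_mul_lt_card
    {V : Type*} [DecidableEq V] {s : Finset V} {F : Finset (V × V)} {m : ℕ}
    (hF : ∀ p ∈ F, p.1 ∈ s) (hm : #s * m < #F) : ∃ v, m < #{p ∈ F | p.1 = v ∨ p.2 = v} := by
  obtain ⟨v, -, hv⟩ := exists_lt_card_fiber_of_mul_lt_card_of_maps_to hF hm
  exact ⟨v, hv.trans_le (card_le_card (monotone_filter_right _ fun _ _ => Or.inl))⟩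

theorem bipartite_deletion_degree_general
    {V : Type*} [DecidableEq V] (n t s a b : ℕ)
    (hs1 : 1 ≤ s) (hst : s ≤ t)
    (U₁ U₂ : Finset V) (hU₁ : U₁.card = n) (hU₂ : U₂.card = n)
    (F : Finset (V × V)) (hFsub : F ⊆ U₁ ×ˢ U₂)
    (hFcard : F.card > (t - 1) * n)
    (X : Finset V)
    (ha : (X ∩ U₁).card = a) (hb : (X ∩ U₂).card = b)
    (habs : a + b ≤ s - 1) :
    ((F.filter (fun p => p.1 ∉ X ∧ p.2 ∉ X)).card > (t - s) * n + a * b) ∧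
    (∃ v : V, ((F.filter (fun p => p.1 ∉ X ∧ p.2 ∉ X)).filter
        (fun p => p.1 = v ∨ p.2 = v)).card > t - s) := by
  have hcount := card_add_le_card_filter_fst_notMem_and_snd_notMem (A := X) (B := X) hFsub
  rw [ha, hb, hU₁, hU₂] at hcount
  have htotal : (t - 1) * n = (t - s) * n + (s - 1) * n := by
    rw [← add_mul]; congr 1; omega
  have hmeet_le : (a + b) * n ≤ (s - 1) * n := Nat.mul_le_mul_right n habs
  have hedges : (F.filter (fun p => p.1 ∉ X ∧ p.2 ∉ X)).card > (t - s) * n + a * b := by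
    rw [add_mul] at hmeet_le
    linarith
  refine ⟨hedges, exists_lt_card_filter_incident_of_mul_lt_card
    (fun p hp => (mem_product.mp (hFsub (mem_filter.mp hp).1)).1) ?_⟩
  rw [hU₁, mul_comm]
  omega

/-- The counting step in the proof of Lemma 2.1 (bipartite case `r = 2`): if
`F ⊆ U₁ × U₂` with `|F| > (t-1)n`, and `X` is a set of `s-1` vertices with
`|X ∩ U₁| = a ≥ b = |X ∩ U₂|` and `a + b ≤ s - 1 ≤ t - 1`, then the subgraph of
edges avoiding `X` has more than `(t-s)n + ab` edges and contains a vertex of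
degree greater than `t - s`. -/
theorem bipartite_deletion_degree
    {V : Type*} [DecidableEq V] (n t s a b : ℕ)
    (hs1 : 1 ≤ s) (hst : s ≤ t) (htn : t < n)
    (U₁ U₂ : Finset V) (hU₁ : U₁.card = n) (hU₂ : U₂.card = n)
    (hdisj : Disjoint U₁ U₂)
    (F : Finset (V × V)) (hFsub : F ⊆ U₁ ×ˢ U₂)
    (hFcard : F.card > (t - 1) * n)
    (X : Finset V) (hX : X.card = s - 1)
    (ha : (X ∩ U₁).card = a) (hb : (X ∩ U₂).card = b)
    (hab : a ≥ b) (habs : a + b ≤ s - 1) :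
    ((F.filter (fun p => p.1 ∉ X ∧ p.2 ∉ X)).card > (t - s) * n + a * b) ∧
    (∃ v : V, ((F.filter (fun p => p.1 ∉ X ∧ p.2 ∉ X)).filter
        (fun p => p.1 = v ∨ p.2 = v)).card > t - s) :=
  bipartite_deletion_degree_general n t s a b hs1 hst U₁ U₂ hU₁ hU₂ F hFsub hFcard X ha hb habs
end
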